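/- arXiv:2003.08762 — 3 statements merged into one kernel-verified Lean document; each statement's English description precedes it below -/
import Mathlib

section
/- Let K ⊆ X be a nonempty compact T-invariant set and define f : X → ℝ by f(x) := -inf_{y ∈ K} d(x,y). Then f is continuous, β(f) = 0, and the maximising measures of f are precisely the T-invariant Borel probability measures supported on K; that is, for μ ∈ M_T one has ∫ f dμ = β(f) if and only if μ(K) = 1. -/
/-!
Since `-infDist · K ≤ 0` with equality exactly on the closed set `K`, every probability measure
integrates it to at most `0`, with equality iff it gives full mass to `K`. So everything reduces
to the existence of one invariant measure supported on `K`, which is the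
Krylov–Bogolyubov theorem for `T` restricted to `K`: any weak-* cluster point of the
orbit averages `(n+1)⁻¹ ∑_{k ≤ n} δ_{T^k x}` is invariant, because the averages of `g ∘ T`
and `g` along an orbit differ by `O(1/n)`.
-/

open MeasureTheory

variable {X : Type*} [MetricSpace X] [CompactSpace X] [MeasurableSpace X] [BorelSpace X]

/-- The set of `T`-invariant Borel probability measures on `X`. -/
def invMeasures (T : X → X) : Set (ProbabilityMeasure X) :=
  {μ | MeasurePreserving T (μ : Measure X) (μ : Measure X)}

/-- `beta T f = sup_{μ ∈ M_T} ∫ f dμ`. -/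
noncomputable def beta (T : X → X) (f : X → ℝ) : ℝ :=
  sSup ((fun μ : ProbabilityMeasure X => ∫ x, f x ∂(μ : Measure X)) '' invMeasures T)

/-- The set of maximising measures of `f`. -/
def Mmax (T : X → X) (f : X → ℝ) : Set (ProbabilityMeasure X) :=
  {μ | μ ∈ invMeasures T ∧ ∫ x, f x ∂(μ : Measure X) = beta T f}

/-- The set of integrals of `g` against the maximising measures of `f`. -/
noncomputable def maxInts (T : X → X) (f g : X → ℝ) : Set ℝ :=
  (fun μ : ProbabilityMeasure X => ∫ x, g x ∂(μ : Measure X)) '' Mmax T f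

open Filter Topology Finset BoundedContinuousFunction

theorem birkhoffAverage_comp_self {R α M : Type*} [DivisionSemiring R] [AddCommMonoid M]
    [Module R M] (f : α → α) (g : α → M) (n : ℕ) (x : α) :
    birkhoffAverage R f (g ∘ f) n x = birkhoffAverage R f g n (f x) := by
  simp only [birkhoffAverage, birkhoffSum, Function.comp_apply, ← Function.iterate_succ_apply' f,
    Function.iterate_succ_apply]

section KrylovBogolyubov

variable {Y : Type*} [MetricSpace Y] [MeasurableSpace Y] [BorelSpace Y]

noncomputable def orbitAverage (S : Y → Y) (x : Y) (n : ℕ) : ProbabilityMeasure Y :=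
  ⟨((n + 1 : ℕ) : ENNReal)⁻¹ • ∑ k ∈ range (n + 1), Measure.dirac (S^[k] x), by
    constructor
    simp [ENNReal.inv_mul_cancel]⟩

theorem integral_orbitAverage (S : Y → Y) (x : Y) (n : ℕ) (g : Y →ᵇ ℝ) :
    ∫ y, g y ∂(orbitAverage S x n : Measure Y) = birkhoffAverage ℝ S g (n + 1) x := by
  rw [orbitAverage, ProbabilityMeasure.coe_mk, integral_smul_measure,
    integral_finsetSum_measure fun k _ => g.integrable _]
  simp only [integral_dirac' _ _ g.continuous.stronglyMeasurable]
  simp [birkhoffAverage, birkhoffSum, ENNReal.toReal_add]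

theorem measurePreserving_of_mapClusterPt_orbitAverage {S : Y → Y} (hS : Continuous S) {x : Y}
    {μ : ProbabilityMeasure Y} (hμ : MapClusterPt μ atTop (orbitAverage S x)) :
    MeasurePreserving S μ μ := by
  refine ⟨hS.measurable, ext_of_forall_integral_eq_of_IsFiniteMeasure fun g => ?_⟩
  rw [integral_map hS.aemeasurable g.continuous.aestronglyMeasurable]
  let gS := g.compContinuous ⟨S, hS⟩
  let defect : ProbabilityMeasure Y → ℝ := fun ν => ∫ y, gS y ∂ν - ∫ y, g y ∂ν
  have defect_continuous : Continuous defect :=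
    (ProbabilityMeasure.continuous_integral_boundedContinuousFunction gS).sub
      (ProbabilityMeasure.continuous_integral_boundedContinuousFunction g)
  have defect_tendsto : Tendsto (defect ∘ orbitAverage S x) atTop (𝓝 0) := by
    refine ((tendsto_add_atTop_iff_nat 1).2
      (tendsto_birkhoffAverage_apply_sub_birkhoffAverage' ℝ g.isBounded_range S x)).congr
      fun n => ?_
    simp only [Function.comp_apply, defect, integral_orbitAverage, ← birkhoffAverage_comp_self]
    rfl
  have defect_eq : defect μ = 0 := eq_of_nhds_neBot <|
    (hμ.continuousAt_comp defect_continuous.continuousAt).neBot.mono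
      (inf_le_inf_left _ defect_tendsto)
  exact sub_eq_zero.1 defect_eq

theorem exists_measurePreserving_probabilityMeasure [CompactSpace Y] [Nonempty Y] {S : Y → Y}
    (hS : Continuous S) : ∃ μ : ProbabilityMeasure Y, MeasurePreserving S μ μ := by
  obtain ⟨μ, hμ⟩ :=
    exists_clusterPt_of_compactSpace (map (orbitAverage S (Classical.arbitrary Y)) atTop)
  exact ⟨μ, measurePreserving_of_mapClusterPt_orbitAverage hS hμ⟩

theorem exists_measurePreserving_probabilityMeasure_of_mapsTo {T : Y → Y} (hT : Continuous T)
    {K : Set Y} (hKne : K.Nonempty) (hK : IsCompact K) (hKinv : Set.MapsTo T K K) :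
    ∃ μ : ProbabilityMeasure Y, MeasurePreserving T μ μ ∧ (μ : Measure Y) K = 1 := by
  have := isCompact_iff_compactSpace.1 hK
  have := hKne.to_subtype
  obtain ⟨ν, hν⟩ := exists_measurePreserving_probabilityMeasure (hT.restrict hKinv)
  refine ⟨ν.map measurable_subtype_coe.aemeasurable, ⟨hT.measurable, ?_⟩, ?_⟩
  · have hcomm : T ∘ Subtype.val = Subtype.val ∘ hKinv.restrict := rfl
    rw [ProbabilityMeasure.toMeasure_map, Measure.map_map hT.measurable measurable_subtype_coe,
      hcomm, ← Measure.map_map measurable_subtype_coe hν.measurable, hν.map_eq]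
  · rw [ProbabilityMeasure.toMeasure_map, Measure.map_apply measurable_subtype_coe
      hK.measurableSet, Subtype.coe_preimage_self, measure_univ]

end KrylovBogolyubov

theorem integral_infDist_eq_zero_iff {Y : Type*} [MetricSpace Y] [CompactSpace Y]
    [MeasurableSpace Y] [BorelSpace Y] (μ : Measure Y) [IsFiniteMeasure μ] {K : Set Y}
    (hKne : K.Nonempty) (hK : IsClosed K) :
    ∫ x, Metric.infDist x K ∂μ = 0 ↔ μ Kᶜ = 0 := by
  rw [integral_eq_zero_iff_of_nonneg (fun _ => Metric.infDist_nonneg)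
    ((Metric.continuous_infDist_pt K).integrable_of_hasCompactSupport
      (HasCompactSupport.of_compactSpace _))]
  simp only [EventuallyEq, Pi.zero_apply, ← hK.mem_iff_infDist_zero hKne]
  exact ae_iff

theorem stmt1_general (T : X → X) (hT : Continuous T)
    (K : Set X) (hKne : K.Nonempty) (hK : IsCompact K) (hKinv : Set.MapsTo T K K) :
    Continuous (fun x : X => -Metric.infDist x K) ∧
    beta T (fun x : X => -Metric.infDist x K) = 0 ∧
    ∀ μ ∈ invMeasures T,
      ((∫ x, (-Metric.infDist x K) ∂(μ : Measure X)
          = beta T (fun x : X => -Metric.infDist x K)) ↔ (μ : Measure X) K = 1) := by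
  have integral_le_zero (μ : ProbabilityMeasure X) :
      ∫ x, -Metric.infDist x K ∂(μ : Measure X) ≤ 0 :=
    integral_nonpos fun _ => neg_nonpos.2 Metric.infDist_nonneg
  have integral_eq_zero_iff (μ : ProbabilityMeasure X) :
      ∫ x, -Metric.infDist x K ∂(μ : Measure X) = 0 ↔ (μ : Measure X) K = 1 := by
    rw [integral_neg, neg_eq_zero, integral_infDist_eq_zero_iff _ hKne hK.isClosed,
      prob_compl_eq_zero_iff hK.measurableSet]
  obtain ⟨μ₀, hμ₀, hμ₀K⟩ :=
    exists_measurePreserving_probabilityMeasure_of_mapsTo hT hKne hK hKinv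
  have hβ : beta T (fun x : X => -Metric.infDist x K) = 0 := by
    refine IsGreatest.csSup_eq ⟨⟨μ₀, hμ₀, (integral_eq_zero_iff μ₀).2 hμ₀K⟩, ?_⟩
    rintro _ ⟨μ, -, rfl⟩
    exact integral_le_zero μ
  refine ⟨(Metric.continuous_infDist_pt K).neg, hβ, fun μ _ => ?_⟩
  rw [hβ]
  exact integral_eq_zero_iff μ

theorem stmt1 [Nonempty X] (T : X → X) (hT : Continuous T)
    (K : Set X) (hKne : K.Nonempty) (hK : IsCompact K) (hKinv : Set.MapsTo T K K) :
    Continuous (fun x : X => -Metric.infDist x K) ∧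
    beta T (fun x : X => -Metric.infDist x K) = 0 ∧
    ∀ μ ∈ invMeasures T,
      ((∫ x, (-Metric.infDist x K) ∂(μ : Measure X)
          = beta T (fun x : X => -Metric.infDist x K)) ↔ (μ : Measure X) K = 1) :=
  stmt1_general T hT K hKne hK hKinv
end

section
/- For all continuous functions f, g : X → ℝ, one has limsup_{τ → 0⁺} sup_{μ ∈ M_max(f + τ·g)} ∫ g dμ ≤ sup_{μ ∈ M_max(f)} ∫ g dμ. -/
/-!
The argument is Berge's maximum theorem. On a compact metric space the invariant probability
measures form a closed subset of the compact space of probability measures, and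
`(τ, μ) ↦ ∫ (f + τ g) dμ` is jointly continuous. Hence the graph of `τ ↦ M_max(f + τ g)` is
closed, and projecting away the compact factor shows that `{τ | some μ ∈ M_max(f + τ g) has
∫ g dμ ≥ c}` is closed. If `c` exceeds the supremum over `M_max(f)`, this set misses `0`, so it
misses a neighbourhood of `0`.
-/

open MeasureTheory

variable {X : Type*} [MetricSpace X] [CompactSpace X] [MeasurableSpace X] [BorelSpace X]

open Filter Topology Set

section ArgmaxUpperSemicontinuous

variable {Θ P : Type*} [TopologicalSpace Θ] [TopologicalSpace P] [CompactSpace P] {K : Set P}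
  {φ : Θ → P → ℝ} {ψ : P → ℝ}

lemma isClosed_setOf_exists_isMaxOn_le (hK : IsClosed K) (hφ : Continuous (Function.uncurry φ))
    (hψ : Continuous ψ) (c : ℝ) :
    IsClosed {τ | ∃ μ ∈ K, IsMaxOn (φ τ) K μ ∧ c ≤ ψ μ} := by
  have hmax : IsClosed {p : Θ × P | IsMaxOn (φ p.1) K p.2} := by
    simp only [isMaxOn_iff, ofPred_forall]
    exact isClosed_biInter fun ν _ =>
      isClosed_le (hφ.comp (continuous_fst.prodMk continuous_const)) hφ
  have hgraph : IsClosed ((Prod.snd ⁻¹' K) ∩ {p : Θ × P | IsMaxOn (φ p.1) K p.2} ∩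
      {p | c ≤ ψ p.2}) :=
    ((hK.preimage continuous_snd).inter hmax).inter
      (isClosed_le continuous_const (hψ.comp continuous_snd))
  convert isClosedMap_fst_of_compactSpace _ hgraph using 1
  ext τ
  simp [and_assoc]

theorem limsup_sSup_image_isMaxOn_le (hK : IsClosed K) (hKne : K.Nonempty)
    (hφ : Continuous (Function.uncurry φ)) (hψ : Continuous ψ) {τ₀ : Θ} {l : Filter Θ} [l.NeBot]
    (hl : l ≤ 𝓝 τ₀) :
    limsup (fun τ => sSup (ψ '' {μ ∈ K | IsMaxOn (φ τ) K μ})) l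
      ≤ sSup (ψ '' {μ ∈ K | IsMaxOn (φ τ₀) K μ}) := by
  have hmaximisers (τ : Θ) : {μ ∈ K | IsMaxOn (φ τ) K μ}.Nonempty :=
    hK.isCompact.exists_isMaxOn hKne (hφ.uncurry_left τ).continuousOn
  have hbdd (s : Set P) : BddAbove (ψ '' s) :=
    (isCompact_range hψ).bddAbove.mono (image_subset_range _ _)
  obtain ⟨m, hm⟩ := (isCompact_range hψ).bddBelow
  have hlower (τ : Θ) : m ≤ sSup (ψ '' {μ ∈ K | IsMaxOn (φ τ) K μ}) := by
    obtain ⟨μ, hμ⟩ := hmaximisers τ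
    exact (hm ⟨μ, rfl⟩).trans (le_csSup (hbdd _) ⟨μ, hμ, rfl⟩)
  refine le_of_forall_gt_imp_ge_of_dense fun c hc => ?_
  have hτ₀ : τ₀ ∈ {τ | ∃ μ ∈ K, IsMaxOn (φ τ) K μ ∧ c ≤ ψ μ}ᶜ := by
    rintro ⟨μ, hμK, hμ, hcμ⟩
    exact (hc.trans_le hcμ).not_ge (le_csSup (hbdd _) ⟨μ, ⟨hμK, hμ⟩, rfl⟩)
  refine limsup_le_of_le (isBoundedUnder_of ⟨m, hlower⟩).isCoboundedUnder_le ?_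
  have hopen := (isClosed_setOf_exists_isMaxOn_le hK hφ hψ c).isOpen_compl
  filter_upwards [hl (hopen.mem_nhds hτ₀)] with τ hτ
  refine csSup_le ((hmaximisers τ).image ψ) ?_
  rintro _ ⟨μ, ⟨hμK, hμ⟩, rfl⟩
  exact le_of_not_ge fun hcμ => hτ ⟨μ, hμK, hμ, hcμ⟩

end ArgmaxUpperSemicontinuous

omit [CompactSpace X] in
lemma isClosed_invMeasures {T : X → X} (hT : Continuous T) : IsClosed (invMeasures T) := by
  have : invMeasures T = {μ | μ.map hT.measurable.aemeasurable = μ} := by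
    ext μ
    exact ⟨fun h => Subtype.ext h.map_eq, fun h => ⟨hT.measurable, congrArg Subtype.val h⟩⟩
  rw [this]
  exact isClosed_eq (ProbabilityMeasure.continuous_map hT) continuous_id

lemma Mmax_eq_setOf_isMaxOn (T : X → X) (h : C(X, ℝ)) :
    Mmax T h = {μ ∈ invMeasures T | IsMaxOn
      (fun ν : ProbabilityMeasure X => ∫ x, h x ∂(ν : Measure X)) (invMeasures T) μ} := by
  have hbdd : BddAbove ((fun ν : ProbabilityMeasure X => ∫ x, h x ∂(ν : Measure X)) ''
      invMeasures T) :=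
    (isCompact_range (ProbabilityMeasure.continuous_integral_continuousMap h)).bddAbove.mono
      (image_subset_range _ _)
  ext μ
  refine and_congr_right fun hμ => ⟨fun hβ => isMaxOn_iff.2 fun ν hν => ?_, fun hmax => ?_⟩
  · exact hβ ▸ le_csSup hbdd ⟨ν, hν, rfl⟩
  · refine le_antisymm (le_csSup hbdd ⟨μ, hμ, rfl⟩) (csSup_le ⟨_, μ, hμ, rfl⟩ ?_)
    rintro _ ⟨ν, hν, rfl⟩
    exact hmax hν

lemma integral_add_smul_continuousMap (f g : C(X, ℝ)) (τ : ℝ) (μ : Measure X)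
    [IsFiniteMeasure μ] : ∫ x, (f + τ • g) x ∂μ = ∫ x, f x ∂μ + τ * ∫ x, g x ∂μ := by
  simp only [ContinuousMap.add_apply, ContinuousMap.smul_apply, smul_eq_mul]
  rw [integral_add, integral_const_mul]
  · exact f.continuous.integrable_of_hasCompactSupport (.of_compactSpace _)
  · exact (g.continuous.integrable_of_hasCompactSupport (.of_compactSpace _)).const_mul τ

theorem stmt7_general (T : X → X) (hT : Continuous T) (f g : C(X, ℝ)) :
    Filter.limsup (fun τ : ℝ => sSup (maxInts T ⇑(f + τ • g) ⇑g))
        (nhdsWithin 0 (Set.Ioi 0))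
      ≤ sSup (maxInts T ⇑f ⇑g) := by
  rcases (invMeasures T).eq_empty_or_nonempty with hempty | hne
  · -- no maximising measures at all, so both sides are the junk value `sSup ∅ = 0`
    have hmaxInts (h : X → ℝ) : maxInts T h g = ∅ := by simp [maxInts, Mmax, hempty]
    simp [hmaxInts]
  have hφ : Continuous (Function.uncurry fun (τ : ℝ) (μ : ProbabilityMeasure X) =>
      ∫ x, (f + τ • g) x ∂(μ : Measure X)) := by
    simp only [Function.uncurry_def, integral_add_smul_continuousMap]
    exact ((ProbabilityMeasure.continuous_integral_continuousMap f).comp continuous_snd).add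
      (continuous_fst.mul ((ProbabilityMeasure.continuous_integral_continuousMap g).comp
        continuous_snd))
  have := limsup_sSup_image_isMaxOn_le (isClosed_invMeasures hT) hne hφ
    (ProbabilityMeasure.continuous_integral_continuousMap g) (l := 𝓝[>] 0) nhdsWithin_le_nhds
  simpa only [maxInts, Mmax_eq_setOf_isMaxOn, zero_smul, add_zero] using this

theorem stmt7 [Nonempty X] (T : X → X) (hT : Continuous T) (f g : C(X, ℝ)) :
    Filter.limsup (fun τ : ℝ => sSup (maxInts T ⇑(f + τ • g) ⇑g))
        (nhdsWithin 0 (Set.Ioi 0))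
      ≤ sSup (maxInts T ⇑f ⇑g) :=
  stmt7_general T hT f g
end

section
/- For all continuous functions f, g : X → ℝ, the one-sided limit lim_{τ → 0⁻} (β(f + τ·g) − β(f))/τ exists and equals inf_{μ ∈ M_max(f)} ∫ g dμ. -/
/-!
The invariant measures form a closed, hence compact, subset of the probability measures on `X`
(Prokhorov), and `μ ↦ ∫ f dμ` is continuous, so this is Danskin's theorem for the maximum `β(τ)`
of the family `F + τ G` over a compact set `S`. For `τ < 0`, testing `β(τ)` at a maximiser `x`
of `F` gives `(β(τ) - β(0)) / τ ≤ G x`. Conversely, if `d` is below `G` on the maximisers of `F`,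
then `F + τ G ≤ max F + τ d` on `S` for all small `τ ≤ 0`: near a maximiser `G > d`, and
elsewhere `F` stays below its maximum; the tube lemma makes this uniform over `S`.
-/

open MeasureTheory

variable {X : Type*} [MetricSpace X] [CompactSpace X] [MeasurableSpace X] [BorelSpace X]

open Filter Topology Set

section Danskin

variable {α : Type*} [TopologicalSpace α] {S : Set α} {F G : α → ℝ}

theorem IsCompact.eventually_add_mul_le_add_mul (hS : IsCompact S) (hF : Continuous F)
    (hG : Continuous G) {m d : ℝ} (hm : ∀ y ∈ S, F y ≤ m) (hd : ∀ y ∈ S, F y = m → d < G y) :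
    ∀ᶠ τ in 𝓝[≤] 0, ∀ y ∈ S, F y + τ * G y ≤ m + τ * d := by
  have local_bound : ∀ x ∈ S, ∀ᶠ p : ℝ × α in 𝓝 (0, x),
      p.1 ≤ 0 → p.2 ∈ S → F p.2 + p.1 * G p.2 ≤ m + p.1 * d := by
    intro x hx
    rcases (hm x hx).lt_or_eq with hlt | heq
    · have hcont : Continuous fun p : ℝ × α => F p.2 + p.1 * (G p.2 - d) := by fun_prop
      have hnear : ∀ᶠ p : ℝ × α in 𝓝 (0, x), F p.2 + p.1 * (G p.2 - d) < m :=
        hcont.continuousAt.eventually_lt continuousAt_const (by simpa using hlt)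
      filter_upwards [hnear] with p hp _ _
      linarith
    · have hnear : ∀ᶠ p : ℝ × α in 𝓝 (0, x), d < G p.2 :=
        continuousAt_const.eventually_lt (hG.comp continuous_snd).continuousAt (hd x hx heq)
      filter_upwards [hnear] with p hp hp₁ hp₂
      nlinarith [hm p.2 hp₂]
  filter_upwards [nhdsWithin_le_nhds <| hS.eventually_forall_of_forall_eventually
      (P := fun τ y => τ ≤ 0 → y ∈ S → F y + τ * G y ≤ m + τ * d) local_bound,
    self_mem_nhdsWithin] with τ hτ hτ₀ y hy
  exact hτ y hy hτ₀ hy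

theorem IsCompact.tendsto_sSup_image_add_smul_sub_div (hS : IsCompact S) (hF : Continuous F)
    (hG : Continuous G) :
    Tendsto (fun τ : ℝ => (sSup ((F + τ • G) '' S) - sSup (F '' S)) / τ) (𝓝[<] 0)
      (𝓝 (sInf (G '' {x ∈ S | F x = sSup (F '' S)}))) := by
  rcases S.eq_empty_or_nonempty with rfl | hne
  · simp
  set m := sSup (F '' S)
  set A := {x ∈ S | F x = m}
  set c := sInf (G '' A)
  have hm : ∀ y ∈ S, F y ≤ m := fun y hy =>
    le_csSup (hS.image hF).bddAbove (mem_image_of_mem F hy)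
  have hA : A.Nonempty := by
    obtain ⟨x, hx, hFx⟩ := hS.exists_sSup_image_eq hne hF.continuousOn
    exact ⟨x, hx, hFx.symm⟩
  have hc : ∀ x ∈ A, c ≤ G x := fun x hx =>
    csInf_le ((hS.image hG).bddBelow.mono (image_mono fun _ h => h.1)) (mem_image_of_mem G hx)
  have upper : ∀ τ < 0, (sSup ((F + τ • G) '' S) - m) / τ ≤ c := by
    intro τ hτ
    refine le_csInf (hA.image G) ?_
    rintro _ ⟨x, ⟨hxS, hxm⟩, rfl⟩
    have hle : F x + τ * G x ≤ sSup ((F + τ • G) '' S) :=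
      le_csSup (hS.image (by fun_prop)).bddAbove (mem_image_of_mem (F + τ • G) hxS)
    rw [div_le_iff_of_neg hτ]
    linarith
  have lower : ∀ d < c, ∀ᶠ τ in 𝓝[<] 0, d ≤ (sSup ((F + τ • G) '' S) - m) / τ := by
    intro d hd
    have hev := hS.eventually_add_mul_le_add_mul hF hG hm
      fun y hy hFy => hd.trans_le (hc y ⟨hy, hFy⟩)
    filter_upwards [nhdsWithin_mono 0 Iio_subset_Iic_self hev, self_mem_nhdsWithin]
      with τ hτ hτ₀
    have hle : sSup ((F + τ • G) '' S) ≤ m + τ * d :=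
      csSup_le (hne.image _) (by rintro _ ⟨y, hy, rfl⟩; exact hτ y hy)
    rw [le_div_iff_of_neg hτ₀]
    linarith
  refine tendsto_order.2 ⟨fun d hd => ?_, fun e he => ?_⟩
  · obtain ⟨d', hdd', hd'c⟩ := exists_between hd
    filter_upwards [lower d' hd'c] with τ hτ using hdd'.trans_le hτ
  · filter_upwards [self_mem_nhdsWithin] with τ hτ using (upper τ hτ).trans_lt he

end Danskin

lemma isCompact_invMeasures {T : X → X} (hT : Continuous T) : IsCompact (invMeasures T) := by
  have h_eq : invMeasures T = {μ | μ.map hT.measurable.aemeasurable = μ} := by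
    ext μ
    simp only [invMeasures, mem_ofPred_eq, ← ProbabilityMeasure.toMeasure_injective.eq_iff,
      ProbabilityMeasure.toMeasure_map]
    exact ⟨MeasurePreserving.map_eq, fun h => ⟨hT.measurable, h⟩⟩
  rw [h_eq]
  exact (isClosed_eq (ProbabilityMeasure.continuous_map hT) continuous_id).isCompact

lemma ContinuousMap.integral_add_smul (μ : Measure X) [IsFiniteMeasure μ]
    (f g : C(X, ℝ)) (τ : ℝ) :
    ∫ x, (f + τ • g) x ∂μ = ∫ x, f x ∂μ + τ * ∫ x, g x ∂μ := by
  have hint : ∀ h : C(X, ℝ), Integrable h μ := fun h =>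
    h.continuous.integrable_of_hasCompactSupport (HasCompactSupport.of_compactSpace _)
  simp only [ContinuousMap.coe_add, ContinuousMap.coe_smul, Pi.add_apply, Pi.smul_apply,
    smul_eq_mul, integral_add (hint f) ((hint g).const_mul τ), integral_const_mul]

theorem stmt9_general (T : X → X) (hT : Continuous T) (f g : C(X, ℝ)) :
    Filter.Tendsto (fun τ : ℝ => (beta T ⇑(f + τ • g) - beta T ⇑f) / τ)
      (nhdsWithin 0 (Set.Iio 0)) (nhds (sInf (maxInts T ⇑f ⇑g))) := by
  refine ((isCompact_invMeasures hT).tendsto_sSup_image_add_smul_sub_div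
    (ProbabilityMeasure.continuous_integral_continuousMap f)
    (ProbabilityMeasure.continuous_integral_continuousMap g)).congr fun τ => ?_
  simp only [beta, Pi.add_def, Pi.smul_apply, smul_eq_mul,
    ContinuousMap.integral_add_smul]

theorem stmt9 [Nonempty X] (T : X → X) (hT : Continuous T) (f g : C(X, ℝ)) :
    Filter.Tendsto (fun τ : ℝ => (beta T ⇑(f + τ • g) - beta T ⇑f) / τ)
      (nhdsWithin 0 (Set.Iio 0)) (nhds (sInf (maxInts T ⇑f ⇑g))) :=
  stmt9_general T hT f g
end
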